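/- Let m ≥ 2 be divisible by 6 and let (R_n)_{n≥0} be a cyclic urn process with m types started with one ball of type 0. Then for every n ≥ 0, E[|u_{m/6}(R_n)|²] = (n+1)·Σ_{t=1}^{n+1} (1/t). -/

import Mathlib

open MeasureTheory ProbabilityTheory Filter Complex Finset Topology

noncomputable section

/-- `ω = exp(2πi/m)`, the `m`-th elementary root of unity. -/
def cw (m : ℕ) : ℂ := Complex.exp (2 * Real.pi * Complex.I / m)

/-- `λ_k = cos(2πk/m)`. -/
def lam (m k : ℕ) : ℝ := Real.cos (2 * Real.pi * k / m)

/-- `μ_k = sin(2πk/m)`. -/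
def muim (m k : ℕ) : ℝ := Real.sin (2 * Real.pi * k / m)

/-- the eigenvector `v_k = (1/m)(1, ω^{-k}, …, ω^{-(m-1)k})`. -/
def vvec (m k : ℕ) : Fin m → ℂ :=
  fun t => (m : ℂ)⁻¹ * cw m ^ (-((k * (t : ℕ) : ℕ) : ℤ))

/-- the dual coefficient `u_k(w) = ∑_t ω^{kt} w_t`. -/
def ucoef (m k : ℕ) (w : Fin m → ℝ) : ℂ :=
  ∑ t : Fin m, cw m ^ (k * (t : ℕ)) * (w t : ℂ)

/-- the replacement matrix `A` of the cyclic urn. -/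
def repA (m : ℕ) : Matrix (Fin m) (Fin m) ℝ :=
  Matrix.of fun i j => if (j : ℕ) = ((i : ℕ) + 1) % m then 1 else 0

/-- the filtration `𝓕_n = σ(R_0, …, R_n)`. -/
def urnFilt {Ω : Type*} [MeasurableSpace Ω] (m : ℕ) (R : ℕ → Ω → Fin m → ℝ) (n : ℕ) :
    MeasurableSpace Ω :=
  ⨆ i ∈ Finset.range (n + 1), MeasurableSpace.comap (R i) inferInstance

/-- A cyclic urn process with `m` types started with one ball of type `j0`. -/
structure IsCyclicUrn {Ω : Type*} [MeasurableSpace Ω] (μ : Measure Ω) (m : ℕ) (j0 : Fin m)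
    (R : ℕ → Ω → Fin m → ℝ) : Prop where
  isProb : IsProbabilityMeasure μ
  meas : ∀ n, Measurable (R n)
  natVal : ∀ n ω i, ∃ z : ℕ, R n ω i = z
  init : ∀ ω, R 0 ω = fun i => if i = j0 then 1 else 0
  step : ∀ n, ∀ j : Fin m,
    μ[Set.indicator {ω | R (n + 1) ω =
        fun i => R n ω i + if (i : ℕ) = ((j : ℕ) + 1) % m then 1 else 0}
      (fun _ => (1 : ℝ)) | urnFilt m R n]
      =ᵐ[μ] fun ω => R n ω j / (n + 1)

/-- componentwise expectation `E[X]` of a random vector. -/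
def expVec {Ω : Type*} [MeasurableSpace Ω] (μ : Measure Ω) {m : ℕ}
    (X : Ω → Fin m → ℝ) : Fin m → ℝ := fun i => ∫ ω, X ω i ∂μ

/-- the martingale `M_{k,n} = (Γ(n+1)/Γ(n+1+ω^k)) u_k(R_n - E[R_n])`, with `M_{k,0} = 0`. -/
def Mart {Ω : Type*} [MeasurableSpace Ω] (μ : Measure Ω) (m k : ℕ)
    (R : ℕ → Ω → Fin m → ℝ) (n : ℕ) (ω : Ω) : ℂ :=
  if n = 0 then 0
  else (Complex.Gamma ((n : ℂ) + 1) / Complex.Gamma ((n : ℂ) + 1 + cw m ^ k)) *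
    ucoef m k (fun t => R n ω t - expVec μ (R n) t)

/-- `ν` is the centered Gaussian distribution `𝒩(0, S)` on `ℝ^d` (Cramér–Wold
characterization: every linear functional is one-dimensional centered Gaussian). -/
def IsCenteredGaussian {d : ℕ} (ν : Measure (Fin d → ℝ)) (S : Matrix (Fin d) (Fin d) ℝ) : Prop :=
  IsProbabilityMeasure ν ∧
  ∀ l : Fin d → ℝ,
    ν.map (fun x => ∑ i, l i * x i) =
      gaussianReal 0 (Real.toNNReal (∑ i, ∑ j, l i * S i j * l j))

/-- convergence in distribution of the random vectors `X_n` to the law `ν`. -/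
def TendstoInDist {Ω : Type*} [MeasurableSpace Ω] (μ : Measure Ω) {d : ℕ}
    (X : ℕ → Ω → Fin d → ℝ) (ν : Measure (Fin d → ℝ)) : Prop :=
  ∀ f : BoundedContinuousFunction (Fin d → ℝ) ℝ,
    Tendsto (fun n => ∫ ω, f (X n ω) ∂μ) atTop (𝓝 (∫ x, f x ∂ν))


/-! Write `α = ω^k` and `X_n = u_k(R_n)`. Drawing a ball of type `j` adds `α^{j+1}` to `X_n`, and
this happens with conditional probability `R_{n,j}/(n+1)`. Since `∑_j R_{n,j} α^{j+1} = α X_n` and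
`|α| = 1`, averaging `|X_n + α^{j+1}|²` over the draw gives
`E|X_{n+1}|² = (1 + 2 Re α/(n+1)) E|X_n|² + 1`. For `k = m/6` we have `Re α = cos(π/3) = 1/2`, and
the recurrence `a_{n+1} = (n+2)/(n+1) a_n + 1`, `a_0 = 1` is solved by `a_n = (n+1) H_{n+1}`. -/

open ComplexConjugate Function

lemma norm_cw (m : ℕ) : ‖cw m‖ = 1 := by
  rw [cw, show 2 * Real.pi * I / m = ((2 * Real.pi / m : ℝ) : ℂ) * I by push_cast; ring,
    Complex.norm_exp_ofReal_mul_I]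

lemma normSq_cw_pow (m s : ℕ) : Complex.normSq (cw m ^ s) = 1 := by
  rw [Complex.normSq_eq_norm_sq, norm_pow, norm_cw, one_pow, one_pow]

lemma cw_pow_self {m : ℕ} (hm : m ≠ 0) : cw m ^ m = 1 := by
  rw [cw, ← Complex.exp_nat_mul, mul_div_cancel₀ _ (Nat.cast_ne_zero.mpr hm),
    Complex.exp_two_pi_mul_I]

lemma re_cw_pow (m k : ℕ) : (cw m ^ k).re = lam m k := by
  rw [cw, ← Complex.exp_nat_mul,
    show (k : ℂ) * (2 * Real.pi * I / m) = ((2 * Real.pi * k / m : ℝ) : ℂ) * I by push_cast; ring,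
    Complex.exp_ofReal_mul_I_re, lam]

lemma lam_div_six {m : ℕ} (hm : m ≠ 0) (h6 : 6 ∣ m) : lam m (m / 6) = 1 / 2 := by
  obtain ⟨q, rfl⟩ := h6
  have hq : (q : ℝ) ≠ 0 := by norm_cast; omega
  rw [lam, Nat.mul_div_cancel_left q (by norm_num), ← Real.cos_pi_div_three]
  congr 1
  push_cast
  field_simp
  ring

def nextUnit (m : ℕ) (j : Fin m) : Fin m → ℝ :=
  fun i => if (i : ℕ) = ((j : ℕ) + 1) % m then 1 else 0

lemma nextUnit_injective (m : ℕ) : Function.Injective (nextUnit m) := by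
  intro j j' h
  have hj : ((j : ℕ) + 1) % m < m := Nat.mod_lt _ j.pos
  have := congrFun h ⟨_, hj⟩
  simp only [nextUnit, if_true] at this
  split_ifs at this with hjj'
  · exact Fin.ext ((Nat.ModEq.add_right_cancel' 1 hjj').eq_of_lt_of_lt j.isLt j'.isLt)
  · exact absurd this one_ne_zero

lemma nextUnit_nonneg {m : ℕ} (j i : Fin m) : 0 ≤ nextUnit m j i := by
  unfold nextUnit; split_ifs <;> norm_num

lemma sum_nextUnit {m : ℕ} (j : Fin m) : ∑ i, nextUnit m j i = 1 := by
  have hj : ((j : ℕ) + 1) % m < m := Nat.mod_lt _ j.pos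
  simp [nextUnit, ← Fin.ext_iff (b := ⟨_, hj⟩)]

lemma ucoef_add (m k : ℕ) (w v : Fin m → ℝ) :
    ucoef m k (w + v) = ucoef m k w + ucoef m k v := by
  simp [ucoef, mul_add, sum_add_distrib]

lemma ucoef_nextUnit {m : ℕ} (k : ℕ) (j : Fin m) :
    ucoef m k (nextUnit m j) = (cw m ^ k) ^ ((j : ℕ) + 1) := by
  have hj : ((j : ℕ) + 1) % m < m := Nat.mod_lt _ j.pos
  have hroot : (cw m ^ k) ^ m = 1 := by
    rw [← pow_mul, mul_comm, pow_mul, cw_pow_self j.pos.ne', one_pow]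
  rw [pow_eq_pow_mod _ hroot]
  simp [ucoef, nextUnit, ← Fin.ext_iff (b := ⟨_, hj⟩), pow_mul, apply_ite ((↑) : ℝ → ℂ)]

lemma norm_ucoef_le {m : ℕ} (k : ℕ) {w : Fin m → ℝ} (hw : ∀ t, 0 ≤ w t) :
    ‖ucoef m k w‖ ≤ ∑ t, w t :=
  (norm_sum_le _ _).trans_eq <| sum_congr rfl fun t _ => by
    rw [norm_mul, norm_pow, norm_cw, one_pow, one_mul, Complex.norm_real,
      Real.norm_of_nonneg (hw t)]

lemma normSq_ucoef_le {m : ℕ} (k : ℕ) {w : Fin m → ℝ} (hw : ∀ t, 0 ≤ w t) :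
    Complex.normSq (ucoef m k w) ≤ (∑ t, w t) ^ 2 := by
  rw [Complex.normSq_eq_norm_sq]
  gcongr
  exact norm_ucoef_le k hw

lemma continuous_ucoef (m k : ℕ) : Continuous (ucoef m k) :=
  continuous_finsetSum _ fun t _ =>
    continuous_const.mul (Complex.continuous_ofReal.comp (continuous_apply t))

lemma sum_normSq_ucoef_add_nextUnit_mul {m : ℕ} (k : ℕ) (w : Fin m → ℝ) :
    ∑ j, Complex.normSq (ucoef m k (w + nextUnit m j)) * w j =
      (∑ j, w j + 2 * lam m k) * Complex.normSq (ucoef m k w) + ∑ j, w j := by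
  set α := cw m ^ k
  set X := ucoef m k w
  have hterm : ∀ j : Fin m, Complex.normSq (ucoef m k (w + nextUnit m j)) =
      Complex.normSq X + 2 * (X * conj (α ^ ((j : ℕ) + 1))).re + 1 := fun j => by
    rw [ucoef_add, ucoef_nextUnit, Complex.normSq_add, ← pow_mul, normSq_cw_pow]
    ring
  have hshift : ∑ j : Fin m, α ^ ((j : ℕ) + 1) * (w j : ℂ) = α * X := by
    simp only [X, ucoef, α, mul_sum, pow_succ, ← pow_mul]
    exact sum_congr rfl fun j _ => by ring
  have hcross : ∑ j : Fin m, (X * conj (α ^ ((j : ℕ) + 1))).re * w j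
      = lam m k * Complex.normSq X := by
    calc ∑ j : Fin m, (X * conj (α ^ ((j : ℕ) + 1))).re * w j
        = (X * conj (∑ j : Fin m, α ^ ((j : ℕ) + 1) * (w j : ℂ))).re := by
          simp only [map_sum, mul_sum, Complex.re_sum, map_mul, Complex.conj_ofReal]
          exact sum_congr rfl fun j _ => by rw [← mul_assoc, Complex.re_mul_ofReal]
      _ = lam m k * Complex.normSq X := by
          rw [hshift, map_mul, mul_left_comm, Complex.mul_conj, ← re_cw_pow, Complex.re_mul_ofReal,
            Complex.conj_re]
  calc ∑ j, Complex.normSq (ucoef m k (w + nextUnit m j)) * w j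
      = ∑ j : Fin m,
          ((Complex.normSq X + 1) * w j + 2 * ((X * conj (α ^ ((j : ℕ) + 1))).re * w j)) :=
        sum_congr rfl fun j _ => by rw [hterm]; ring
    _ = _ := by rw [sum_add_distrib, ← mul_sum, ← mul_sum, hcross]; ring

lemma integral_mul_condExp_of_bound {Ω : Type*} {m mΩ : MeasurableSpace Ω} {μ : Measure Ω}
    [IsFiniteMeasure μ] (hm : m ≤ mΩ) {f g : Ω → ℝ} (hf : StronglyMeasurable[m] f)
    (hg : Integrable g μ) (c : ℝ) (hf_bound : ∀ᵐ ω ∂μ, ‖f ω‖ ≤ c) :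
    ∫ ω, f ω * (μ[g | m]) ω ∂μ = ∫ ω, f ω * g ω ∂μ :=
  (integral_congr_ae (condExp_stronglyMeasurable_mul_of_bound hm hf hg c hf_bound)).symm.trans
    (integral_condExp hm)

section Urn

variable {Ω : Type*} {m : ℕ}

def drawEvent (R : ℕ → Ω → Fin m → ℝ) (n : ℕ) (j : Fin m) : Set Ω :=
  {ω | R (n + 1) ω = R n ω + nextUnit m j}

lemma pairwise_disjoint_drawEvent (R : ℕ → Ω → Fin m → ℝ) (n : ℕ) :
    Pairwise (Disjoint on drawEvent R n) := fun _ _ hne =>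
  Set.disjoint_left.mpr fun _ hj hj' =>
    hne (nextUnit_injective m (add_left_cancel (hj.symm.trans hj')))

variable [MeasurableSpace Ω] {μ : Measure Ω} {j0 : Fin m} {R : ℕ → Ω → Fin m → ℝ}

lemma measurable_urnFilt (R : ℕ → Ω → Fin m → ℝ) (n : ℕ) : Measurable[urnFilt m R n] (R n) :=
  Measurable.of_comap_le <| le_iSup₂
    (f := fun i (_ : i ∈ range (n + 1)) => MeasurableSpace.comap (R i) inferInstance) n
    (self_mem_range_succ n)

namespace IsCyclicUrn

lemma urnFilt_le (hR : IsCyclicUrn μ m j0 R) (n : ℕ) : urnFilt m R n ≤ ‹MeasurableSpace Ω› :=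
  iSup₂_le fun i _ => (hR.meas i).comap_le

lemma nonneg (hR : IsCyclicUrn μ m j0 R) (n : ℕ) (ω : Ω) (i : Fin m) : 0 ≤ R n ω i := by
  obtain ⟨z, hz⟩ := hR.natVal n ω i
  exact hz ▸ z.cast_nonneg

lemma measurableSet_drawEvent (hR : IsCyclicUrn μ m j0 R) (n : ℕ) (j : Fin m) :
    MeasurableSet (drawEvent R n j) :=
  measurableSet_eq_fun (hR.meas (n + 1)) ((hR.meas n).add_const _)

lemma integral_mul_indicator_drawEvent (hR : IsCyclicUrn μ m j0 R) (n : ℕ) (j : Fin m)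
    {g : Ω → ℝ} (hg : StronglyMeasurable[urnFilt m R n] g) {c : ℝ} (hb : ∀ᵐ ω ∂μ, ‖g ω‖ ≤ c) :
    ∫ ω, g ω * (drawEvent R n j).indicator (fun _ => 1) ω ∂μ =
      ∫ ω, g ω * (R n ω j / (n + 1)) ∂μ := by
  have := hR.isProb
  rw [← integral_mul_condExp_of_bound (hR.urnFilt_le n) hg
    ((integrable_const 1).indicator (hR.measurableSet_drawEvent n j)) c hb]
  exact integral_congr_ae (EventuallyEq.rfl.mul (hR.step n j))

lemma integrable_apply_of_ae_sum_eq (hR : IsCyclicUrn μ m j0 R) {n : ℕ}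
    (hsum : ∀ᵐ ω ∂μ, ∑ i, R n ω i = n + 1) (j : Fin m) : Integrable (fun ω => R n ω j) μ := by
  have := hR.isProb
  refine .of_bound (hR.meas n).eval.aestronglyMeasurable (n + 1) ?_
  filter_upwards [hsum] with ω hω
  rw [Real.norm_of_nonneg (hR.nonneg n ω j), ← hω]
  exact single_le_sum (fun i _ => hR.nonneg n ω i) (mem_univ j)

lemma ae_exists_drawEvent_of_ae_sum_eq (hR : IsCyclicUrn μ m j0 R) {n : ℕ}
    (hsum : ∀ᵐ ω ∂μ, ∑ i, R n ω i = n + 1) : ∀ᵐ ω ∂μ, ∃ j, ω ∈ drawEvent R n j := by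
  have := hR.isProb
  have hreal : ∀ j, μ.real (drawEvent R n j) = ∫ ω, R n ω j / (n + 1) ∂μ := fun j => by
    rw [← integral_indicator_one (hR.measurableSet_drawEvent n j), Pi.one_def]
    simpa only [one_mul] using hR.integral_mul_indicator_drawEvent n j (g := fun _ => 1)
      stronglyMeasurable_const (c := 1) (by simp)
  have hunion : μ.real (⋃ j, drawEvent R n j) = 1 := by
    rw [measureReal_iUnion_fintype (pairwise_disjoint_drawEvent R n)
      (hR.measurableSet_drawEvent n), sum_congr rfl fun j _ => hreal j,
      ← integral_finsetSum _ fun j _ => (hR.integrable_apply_of_ae_sum_eq hsum j).div_const _]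
    rw [integral_congr_ae (g := fun _ => (1 : ℝ)) ?_, integral_const, probReal_univ, one_smul]
    filter_upwards [hsum] with ω hω
    rw [← sum_div, hω, div_self (by positivity)]
  simp_rw [← Set.mem_iUnion]
  have hmeas := MeasurableSet.iUnion (hR.measurableSet_drawEvent n)
  rwa [ae_mem_iff_measure_eq hmeas.nullMeasurableSet, measure_univ, ← ENNReal.toReal_eq_one_iff]

lemma ae_sum_eq (hR : IsCyclicUrn μ m j0 R) (n : ℕ) : ∀ᵐ ω ∂μ, ∑ i, R n ω i = n + 1 := by
  induction n with
  | zero => exact .of_forall fun ω => by simp [hR.init ω]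
  | succ n ih =>
    filter_upwards [ih, hR.ae_exists_drawEvent_of_ae_sum_eq ih] with ω hω ⟨j, hj⟩
    rw [show R (n + 1) ω = R n ω + nextUnit m j from hj]
    simp only [Pi.add_apply, sum_add_distrib, hω, sum_nextUnit]
    push_cast; ring

lemma ae_exists_drawEvent (hR : IsCyclicUrn μ m j0 R) (n : ℕ) :
    ∀ᵐ ω ∂μ, ∃ j, ω ∈ drawEvent R n j :=
  hR.ae_exists_drawEvent_of_ae_sum_eq (hR.ae_sum_eq n)

lemma integral_comp_succ (hR : IsCyclicUrn μ m j0 R) (n : ℕ) {F : (Fin m → ℝ) → ℝ}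
    (hF : Measurable F) {C : ℝ} (hC : ∀ j, ∀ᵐ ω ∂μ, ‖F (R n ω + nextUnit m j)‖ ≤ C) :
    ∫ ω, F (R (n + 1) ω) ∂μ = ∫ ω, ∑ j, F (R n ω + nextUnit m j) * (R n ω j / (n + 1)) ∂μ := by
  have := hR.isProb
  have hg : ∀ j, StronglyMeasurable[urnFilt m R n] fun ω => F (R n ω + nextUnit m j) := fun j =>
    (hF.comp ((measurable_urnFilt R n).add_const _)).stronglyMeasurable
  have hgμ : ∀ j, AEStronglyMeasurable (fun ω => F (R n ω + nextUnit m j)) μ := fun j =>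
    ((hg j).mono (hR.urnFilt_le n)).aestronglyMeasurable
  have hdecomp : (fun ω => F (R (n + 1) ω)) =ᵐ[μ]
      fun ω => ∑ j, F (R n ω + nextUnit m j) * (drawEvent R n j).indicator (fun _ => 1) ω := by
    filter_upwards [hR.ae_exists_drawEvent n] with ω ⟨j, hj⟩
    rw [sum_eq_single j, Set.indicator_of_mem hj, mul_one, show R (n + 1) ω = _ from hj]
    · exact fun j' _ hj' => by
        rw [Set.indicator_of_notMem ((pairwise_disjoint_drawEvent R n hj').notMem_of_mem_right hj),
          mul_zero]
    · simp
  rw [integral_congr_ae hdecomp,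
    integral_finsetSum _ fun j _ => ((integrable_const 1).indicator
      (hR.measurableSet_drawEvent n j)).bdd_mul (hgμ j) (hC j),
    integral_finsetSum _ fun j _ =>
      ((hR.integrable_apply_of_ae_sum_eq (hR.ae_sum_eq n) j).div_const _).bdd_mul (hgμ j) (hC j)]
  exact sum_congr rfl fun j _ => hR.integral_mul_indicator_drawEvent n j (hg j) (hC j)

lemma integrable_normSq_ucoef (hR : IsCyclicUrn μ m j0 R) (k n : ℕ) :
    Integrable (fun ω => Complex.normSq (ucoef m k (R n ω))) μ := by
  have := hR.isProb
  refine .of_bound (((Complex.continuous_normSq.comp (continuous_ucoef m k)).measurable.comp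
    (hR.meas n)).aestronglyMeasurable) ((n + 1) ^ 2) ?_
  filter_upwards [hR.ae_sum_eq n] with ω hω
  rw [Real.norm_of_nonneg (Complex.normSq_nonneg _), ← hω]
  exact normSq_ucoef_le k (hR.nonneg n ω)

lemma integral_normSq_ucoef_succ (hR : IsCyclicUrn μ m j0 R) (k n : ℕ) :
    ∫ ω, Complex.normSq (ucoef m k (R (n + 1) ω)) ∂μ =
      (1 + 2 * lam m k / (n + 1)) * ∫ ω, Complex.normSq (ucoef m k (R n ω)) ∂μ + 1 := by
  have := hR.isProb
  have hbound (j : Fin m) :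
      ∀ᵐ ω ∂μ, ‖Complex.normSq (ucoef m k (R n ω + nextUnit m j))‖ ≤ (n + 2) ^ 2 := by
    filter_upwards [hR.ae_sum_eq n] with ω hω
    have hsum : ∑ i, (R n ω + nextUnit m j) i = n + 2 := by
      rw [sum_congr rfl fun i _ => Pi.add_apply _ _ i, sum_add_distrib, hω, sum_nextUnit]; ring
    rw [Real.norm_of_nonneg (Complex.normSq_nonneg _), ← hsum]
    exact normSq_ucoef_le k fun i => add_nonneg (hR.nonneg n ω i) (nextUnit_nonneg j i)
  rw [hR.integral_comp_succ n (F := fun w => Complex.normSq (ucoef m k w))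
    (Complex.continuous_normSq.comp (continuous_ucoef m k)).measurable hbound]
  calc _ = ∫ ω, (1 + 2 * lam m k / (n + 1)) * Complex.normSq (ucoef m k (R n ω)) + 1 ∂μ := by
        refine integral_congr_ae ?_
        filter_upwards [hR.ae_sum_eq n] with ω hω
        simp_rw [← mul_div_assoc, ← sum_div]
        rw [sum_normSq_ucoef_add_nextUnit_mul, hω]
        field_simp
    _ = _ := by
        rw [integral_add ((hR.integrable_normSq_ucoef k n).const_mul _) (integrable_const 1),
          integral_const_mul]
        simp

lemma integral_normSq_ucoef_zero (hR : IsCyclicUrn μ m j0 R) (k : ℕ) :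
    ∫ ω, Complex.normSq (ucoef m k (R 0 ω)) ∂μ = 1 := by
  have := hR.isProb
  simp [hR.init, ucoef, apply_ite ((↑) : ℝ → ℂ), normSq_cw_pow]

end IsCyclicUrn

end Urn

lemma eq_mul_harmonic_of_recurrence {a : ℕ → ℝ} (h0 : a 0 = 1)
    (hsucc : ∀ n : ℕ, a (n + 1) = (1 + 1 / (n + 1)) * a n + 1) (n : ℕ) :
    a n = (n + 1) * ∑ t ∈ Icc 1 (n + 1), (1 : ℝ) / t := by
  induction n with
  | zero => simp [h0]
  | succ n ih =>
    rw [hsucc, ih, sum_Icc_succ_top (by omega : 1 ≤ n + 1 + 1)]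
    push_cast
    field_simp

theorem stmt10 {Ω : Type*} [MeasurableSpace Ω] (μ : Measure Ω) (m : ℕ) (hm : 2 ≤ m)
    (hme : 6 ∣ m) (R : ℕ → Ω → Fin m → ℝ) (hR : IsCyclicUrn μ m ⟨0, by omega⟩ R)
    (n : ℕ) :
    ∫ ω, ‖ucoef m (m / 6) (R n ω)‖ ^ 2 ∂μ =
      ((n : ℝ) + 1) * ∑ t ∈ Finset.Icc 1 (n + 1), (1 : ℝ) / t := by
  simp_rw [← Complex.normSq_eq_norm_sq]
  refine eq_mul_harmonic_of_recurrence
    (a := fun n => ∫ ω, Complex.normSq (ucoef m (m / 6) (R n ω)) ∂μ)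
    (hR.integral_normSq_ucoef_zero (m / 6)) (fun n => ?_) n
  rw [hR.integral_normSq_ucoef_succ, lam_div_six (by omega) hme]
  ring

end
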